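/- arXiv:2505.02605 — 6 statements merged into one kernel-verified Lean document; each statement's English description precedes it below -/
import Mathlib

section
/- Let G be a finite simple triangle-free graph and let W = {a¹, …, aᵗ, b} be a set of distinct vertices, maximal with respect to the property that the induced subgraph on W is a star centered at b (i.e., each aⁱ is adjacent to b and the aⁱ are pairwise nonadjacent). If A is a maximal independent set of the induced subgraph G \ N_G[W], then A ∪ {a¹, …, aᵗ} is a maximal independent set of G. -/
/-- `A` is an independent set of the simple graph `G`. -/
def IsIndep {V : Type*} (G : SimpleGraph V) (A : Set V) : Prop :=
  ∀ a ∈ A, ∀ b ∈ A, ¬ G.Adj a b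

/-- `A` is a maximal independent set of the induced subgraph of `G` on `S`. -/
def IsMaxIndepOn {V : Type*} (G : SimpleGraph V) (S A : Set V) : Prop :=
  A ⊆ S ∧ IsIndep G A ∧ ∀ B : Set V, B ⊆ S → IsIndep G B → A ⊆ B → B = A

/-- The closed neighborhood of a vertex. -/
def closedNbhd {V : Type*} (G : SimpleGraph V) (b : V) : Set V :=
  insert b (G.neighborSet b)

/-!
Every vertex outside `A ∪ {aⁱ}` has a neighbour in it. Off `N[W]` this is the maximality of `A`.
On `N[W]`: the centre `b` and the neighbours of the leaves are adjacent to a leaf, and a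
neighbour of `b` outside `W` is adjacent to a leaf because otherwise it could be added to the star.
-/

section

variable {V : Type*} {G : SimpleGraph V}

theorem isIndep_union {A B : Set V} (hA : IsIndep G A) (hB : IsIndep G B)
    (hAB : ∀ x ∈ A, ∀ y ∈ B, ¬ G.Adj x y) : IsIndep G (A ∪ B) := by
  rintro x (hx | hx) y (hy | hy)
  · exact hA x hx y hy
  · exact hAB x hx y hy
  · exact fun h => hAB y hy x hx h.symm
  · exact hB x hx y hy

theorem isIndep_range_iff {ι : Type*} {a : ι → V} :
    IsIndep G (Set.range a) ↔ ∀ i j, i ≠ j → ¬ G.Adj (a i) (a j) := by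
  refine ⟨fun h i j _ => h _ ⟨i, rfl⟩ _ ⟨j, rfl⟩, ?_⟩
  rintro h _ ⟨i, rfl⟩ _ ⟨j, rfl⟩
  obtain rfl | hij := eq_or_ne i j
  exacts [G.irrefl, h i j hij]

theorem IsMaxIndepOn.exists_adj {S A : Set V} (hA : IsMaxIndepOn G S A) {v : V}
    (hvS : v ∈ S) (hvA : v ∉ A) : ∃ u ∈ A, G.Adj v u := by
  obtain ⟨hAS, hAind, hAmax⟩ := hA
  by_contra! hv
  have hins : IsIndep G (insert v A) := by
    rw [Set.insert_eq]
    refine isIndep_union (fun x hx y hy => ?_) hAind fun x hx y hy => ?_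
    · rw [hx, hy]; exact G.irrefl
    · rw [hx]; exact hv y hy
  exact hvA (hAmax _ (Set.insert_subset hvS hAS) hins (Set.subset_insert v A) ▸
    Set.mem_insert v A)

theorem isMaxIndepOn_univ_of_forall_exists_adj {I : Set V} (hI : IsIndep G I)
    (hdom : ∀ v ∉ I, ∃ u ∈ I, G.Adj v u) : IsMaxIndepOn G Set.univ I := by
  refine ⟨Set.subset_univ I, hI, fun B _ hB hIB => ?_⟩
  refine (Set.Subset.antisymm hIB fun v hvB => ?_).symm
  by_contra hvI
  obtain ⟨u, huI, hvu⟩ := hdom v hvI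
  exact hB v hvB u (hIB huI) hvu

theorem mem_compl_closedNbhds_iff {W : Set V} {v : V} :
    v ∈ (⋃ w ∈ W, closedNbhd G w)ᶜ ↔ ∀ w ∈ W, v ≠ w ∧ ¬ G.Adj w v := by
  simp only [Set.mem_compl_iff, Set.mem_iUnion, not_exists, closedNbhd, Set.mem_insert_iff,
    SimpleGraph.mem_neighborSet, not_or]

theorem exists_adj_leaf_of_mem_closedNbhds_star {L : Set V} {b : V} (hL : L.Nonempty)
    (hstar : ∀ x ∈ L, G.Adj x b)
    (hmax : ∀ v ∉ insert b L, ¬ (G.Adj v b ∧ ∀ x ∈ L, ¬ G.Adj v x))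
    {v : V} (hv : v ∈ ⋃ w ∈ insert b L, closedNbhd G w) (hvL : v ∉ L) :
    ∃ x ∈ L, G.Adj v x := by
  simp only [Set.mem_iUnion, closedNbhd, Set.mem_insert_iff, SimpleGraph.mem_neighborSet,
    exists_prop] at hv
  obtain ⟨w, rfl | hwL, rfl | hwv⟩ := hv
  · obtain ⟨x, hx⟩ := hL
    exact ⟨x, hx, (hstar x hx).symm⟩
  · by_contra! hna
    have hvW : v ∉ insert w L := by
      rintro (rfl | hv)
      exacts [G.irrefl hwv, hvL hv]
    exact hmax v hvW ⟨hwv.symm, hna⟩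
  · exact absurd hwL hvL
  · exact ⟨w, hwL, hwv.symm⟩

end

theorem maxIndep_of_maximal_star_general
    {V : Type*} (G : SimpleGraph V)
    {t : ℕ} (ht : 1 ≤ t) (a : Fin t → V) (b : V)
    (hstar : ∀ i, G.Adj (a i) b)
    (hindep : ∀ i j, i ≠ j → ¬ G.Adj (a i) (a j))
    (hmax : ∀ v : V, v ∉ insert b (Set.range a) →
      ¬ (G.Adj v b ∧ ∀ i, ¬ G.Adj v (a i)))
    (A : Set V)
    (hA : IsMaxIndepOn G ((⋃ w ∈ insert b (Set.range a), closedNbhd G w))ᶜ A) :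
    IsMaxIndepOn G Set.univ (A ∪ Set.range a) := by
  have hAW : ∀ x ∈ A, ∀ w ∈ insert b (Set.range a), x ≠ w ∧ ¬ G.Adj w x :=
    fun x hx => mem_compl_closedNbhds_iff.mp (hA.1 hx)
  refine isMaxIndepOn_univ_of_forall_exists_adj
    (isIndep_union hA.2.1 (isIndep_range_iff.mpr hindep) fun x hx y hy h =>
      (hAW x hx y (Set.mem_insert_of_mem b hy)).2 h.symm) fun v hv => ?_
  rw [Set.mem_union, not_or] at hv
  by_cases hvS : v ∈ (⋃ w ∈ insert b (Set.range a), closedNbhd G w)ᶜ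
  · obtain ⟨u, huA, hvu⟩ := hA.exists_adj hvS hv.1
    exact ⟨u, Or.inl huA, hvu⟩
  · obtain ⟨x, hx, hvx⟩ := exists_adj_leaf_of_mem_closedNbhds_star
      (Set.range_nonempty_iff_nonempty.mpr ⟨⟨0, ht⟩⟩) (Set.forall_mem_range.mpr hstar)
      (fun w hw => by simpa only [Set.forall_mem_range] using hmax w hw)
      (Set.notMem_compl_iff.mp hvS) hv.2
    exact ⟨x, Or.inr hx, hvx⟩

/-- In a triangle-free graph, if `W = {a¹,…,aᵗ,b}` is maximal such that the
induced subgraph on `W` is a star centered at `b`, and `A` is a maximal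
independent set of `G \ N_G[W]`, then `A ∪ {a¹,…,aᵗ}` is a maximal independent
set of `G`. -/
theorem maxIndep_of_maximal_star
    {V : Type*} [Fintype V] (G : SimpleGraph V)
    (hG : G.CliqueFree 3)
    {t : ℕ} (ht : 1 ≤ t) (a : Fin t → V) (b : V)
    (hinj : Function.Injective a) (hne : ∀ i, a i ≠ b)
    (hstar : ∀ i, G.Adj (a i) b)
    (hindep : ∀ i j, i ≠ j → ¬ G.Adj (a i) (a j))
    (hmax : ∀ v : V, v ∉ insert b (Set.range a) →
      ¬ (G.Adj v b ∧ ∀ i, ¬ G.Adj v (a i)))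
    (A : Set V)
    (hA : IsMaxIndepOn G ((⋃ w ∈ insert b (Set.range a), closedNbhd G w))ᶜ A) :
    IsMaxIndepOn G Set.univ (A ∪ Set.range a) :=
  maxIndep_of_maximal_star_general G ht a b hstar hindep hmax A hA
end

section
/- Let G be a finite simple triangle-free unmixed graph, and let W = {a¹, …, aᵗ, b} induce a star centered at b that is maximal among induced stars of G. Then α(G \ N_G[W]) = α(G) − t. -/
/-- The independence number of the induced subgraph of `G` on `S`. -/
noncomputable def indepNumOn {V : Type*} [Fintype V] (G : SimpleGraph V) (S : Set V) : ℕ :=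
  sSup {n : ℕ | ∃ A : Set V, A ⊆ S ∧ IsIndep G A ∧ A.ncard = n}

/-- `G` is unmixed: all maximal independent sets have the same cardinality. -/
def Unmixed {V : Type*} (G : SimpleGraph V) : Prop :=
  ∀ A B : Set V, IsMaxIndepOn G Set.univ A → IsMaxIndepOn G Set.univ B →
    A.ncard = B.ncard

/-!
Write `L = {a¹,…,aᵗ}`. Maximality of the star says that every neighbour of `b` outside `W` is
adjacent to a leaf, and `t ≥ 1` puts `b` itself next to a leaf, so `N_G[W] = N_G[L]`. If `B` is a
maximal independent set of `G \ N_G[L]`, then `B ∪ L` is a maximal independent set of `G`: a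
vertex outside it either lies in `N_G[L]`, hence sees a leaf, or lies in `G \ N_G[L]`, hence
sees `B`. Choosing `|B| = α(G \ N_G[W])`, unmixedness gives
`α(G) = |B ∪ L| = α(G \ N_G[W]) + t`.
-/

section IndependentSets

variable {V : Type*} {G : SimpleGraph V}

lemma isMaxIndepOn_iff_forall_adj {S A : Set V} :
    IsMaxIndepOn G S A ↔
      A ⊆ S ∧ IsIndep G A ∧ ∀ v ∈ S, v ∉ A → ∃ u ∈ A, G.Adj v u := by
  refine ⟨fun ⟨hAS, hA, hmax⟩ => ⟨hAS, hA, fun v hvS hvA => ?_⟩,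
    fun ⟨hAS, hA, hdom⟩ => ⟨hAS, hA, fun B hBS hB hAB => ?_⟩⟩
  · by_contra! hfree
    have hins : IsIndep G (insert v A) := by
      rintro x (rfl | hx) y (rfl | hy)
      · exact G.irrefl
      · exact hfree y hy
      · exact fun h => hfree x hx h.symm
      · exact hA x hx y hy
    have hvA' := hmax _ (Set.insert_subset hvS hAS) hins (Set.subset_insert v A)
    exact hvA (hvA' ▸ Set.mem_insert v A)
  · refine (Set.Subset.antisymm hAB fun v hvB => ?_).symm
    by_contra hvA
    obtain ⟨u, huA, hvu⟩ := hdom v (hBS hvB) hvA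
    exact hB v hvB u (hAB huA) hvu

lemma isIndep_range_of_pairwise {ι : Type*} {a : ι → V}
    (h : ∀ i j, i ≠ j → ¬ G.Adj (a i) (a j)) : IsIndep G (Set.range a) := by
  rintro _ ⟨i, rfl⟩ _ ⟨j, rfl⟩
  by_cases hij : i = j
  · exact hij ▸ G.irrefl
  · exact h i j hij

lemma mem_closedNbhd_of_adj {w v : V} (h : G.Adj w v) : v ∈ closedNbhd G w :=
  Set.mem_insert_of_mem w h

lemma subset_biUnion_closedNbhd (G : SimpleGraph V) (L : Set V) :
    L ⊆ ⋃ w ∈ L, closedNbhd G w :=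
  fun l hl => Set.mem_biUnion hl (Set.mem_insert l _)

lemma IsMaxIndepOn.union_isMaxIndepOn_univ {L B : Set V} (hL : IsIndep G L)
    (hB : IsMaxIndepOn G (⋃ w ∈ L, closedNbhd G w)ᶜ B) :
    IsMaxIndepOn G Set.univ (B ∪ L) := by
  obtain ⟨hBS, hBind, hBdom⟩ := isMaxIndepOn_iff_forall_adj.1 hB
  have hcross : ∀ x ∈ B, ∀ l ∈ L, ¬ G.Adj x l := fun x hx l hl hxl =>
    hBS hx (Set.mem_biUnion hl (mem_closedNbhd_of_adj hxl.symm))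
  refine isMaxIndepOn_iff_forall_adj.2 ⟨Set.subset_univ _, ?_, fun v _ hv => ?_⟩
  · rintro x (hx | hx) y (hy | hy)
    · exact hBind x hx y hy
    · exact hcross x hx y hy
    · exact fun h => hcross y hy x hx h.symm
    · exact hL x hx y hy
  · rw [Set.mem_union, not_or] at hv
    by_cases hvN : v ∈ ⋃ w ∈ L, closedNbhd G w
    · obtain ⟨l, hl, hvl⟩ := Set.mem_iUnion₂.1 hvN
      rcases hvl with rfl | hlv
      · exact absurd hl hv.2
      · exact ⟨l, Or.inr hl, hlv.symm⟩
    · obtain ⟨u, hu, hvu⟩ := hBdom v hvN hv.1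
      exact ⟨u, Or.inl hu, hvu⟩

lemma biUnion_insert_closedNbhd_eq {L : Set V} {b : V} (hb : ∃ l ∈ L, G.Adj l b)
    (hnbr : ∀ v, G.Adj v b → v ∉ L → ∃ l ∈ L, G.Adj v l) :
    ⋃ w ∈ insert b L, closedNbhd G w = ⋃ w ∈ L, closedNbhd G w := by
  rw [Set.biUnion_insert, Set.union_eq_right]
  rintro v (rfl | hbv)
  · obtain ⟨l, hl, hlv⟩ := hb
    exact Set.mem_biUnion hl (mem_closedNbhd_of_adj hlv)
  · by_cases hvL : v ∈ L
    · exact subset_biUnion_closedNbhd G L hvL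
    · obtain ⟨l, hl, hvl⟩ := hnbr v hbv.symm hvL
      exact Set.mem_biUnion hl (mem_closedNbhd_of_adj hvl.symm)

end IndependentSets

section IndependenceNumber

variable {V : Type*} [Fintype V]

lemma bddAbove_ncard_isIndep (G : SimpleGraph V) (S : Set V) :
    BddAbove {n : ℕ | ∃ A : Set V, A ⊆ S ∧ IsIndep G A ∧ A.ncard = n} :=
  ⟨Nat.card V, by rintro _ ⟨A, -, -, rfl⟩; exact Set.ncard_le_card A⟩

lemma IsIndep.ncard_le_indepNumOn {G : SimpleGraph V} {S A : Set V} (hA : IsIndep G A)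
    (hAS : A ⊆ S) :
    A.ncard ≤ indepNumOn G S :=
  le_csSup (bddAbove_ncard_isIndep G S) ⟨A, hAS, hA, rfl⟩

lemma exists_isIndep_ncard_eq_indepNumOn (G : SimpleGraph V) (S : Set V) :
    ∃ A, A ⊆ S ∧ IsIndep G A ∧ A.ncard = indepNumOn G S :=
  Nat.sSup_mem (s := {n : ℕ | ∃ A : Set V, A ⊆ S ∧ IsIndep G A ∧ A.ncard = n})
    ⟨0, ∅, Set.empty_subset S, fun _ h => h.elim, Set.ncard_empty V⟩
    (bddAbove_ncard_isIndep G S)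

lemma exists_isMaxIndepOn_ncard_eq_indepNumOn (G : SimpleGraph V) (S : Set V) :
    ∃ A, IsMaxIndepOn G S A ∧ A.ncard = indepNumOn G S := by
  obtain ⟨A, hAS, hA, hAcard⟩ := exists_isIndep_ncard_eq_indepNumOn G S
  refine ⟨A, ⟨hAS, hA, fun B hBS hB hAB => ?_⟩, hAcard⟩
  exact (Set.eq_of_subset_of_ncard_le hAB (hAcard ▸ hB.ncard_le_indepNumOn hBS)).symm

lemma Unmixed.ncard_eq_indepNumOn {G : SimpleGraph V} (hU : Unmixed G) {A : Set V}
    (hA : IsMaxIndepOn G Set.univ A) : A.ncard = indepNumOn G Set.univ := by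
  obtain ⟨M, hM, hMcard⟩ := exists_isMaxIndepOn_ncard_eq_indepNumOn G Set.univ
  exact hMcard ▸ hU A M hA hM

end IndependenceNumber

theorem indepNum_of_maximal_star_unmixed_general
    {V : Type*} [Fintype V] (G : SimpleGraph V)
    (hU : Unmixed G)
    {t : ℕ} (ht : 1 ≤ t) (a : Fin t → V) (b : V)
    (hinj : Function.Injective a)
    (hstar : ∀ i, G.Adj (a i) b)
    (hindep : ∀ i j, i ≠ j → ¬ G.Adj (a i) (a j))
    (hmax : ∀ v : V, v ∉ insert b (Set.range a) →
      ¬ (G.Adj v b ∧ ∀ i, ¬ G.Adj v (a i))) :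
    indepNumOn G ((⋃ w ∈ insert b (Set.range a), closedNbhd G w))ᶜ =
      indepNumOn G Set.univ - t := by
  have hN : ⋃ w ∈ insert b (Set.range a), closedNbhd G w =
      ⋃ w ∈ Set.range a, closedNbhd G w := by
    refine biUnion_insert_closedNbhd_eq ⟨a ⟨0, ht⟩, ⟨_, rfl⟩, hstar _⟩
      fun v hvb hva => ?_
    have hvW : v ∉ insert b (Set.range a) := by
      rintro (rfl | hv)
      exacts [G.irrefl hvb, hva hv]
    obtain ⟨i, hvi⟩ := not_forall_not.1 fun h => hmax v hvW ⟨hvb, h⟩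
    exact ⟨a i, ⟨i, rfl⟩, hvi⟩
  rw [hN]
  obtain ⟨B, hB, hBcard⟩ := exists_isMaxIndepOn_ncard_eq_indepNumOn G
    (⋃ w ∈ Set.range a, closedNbhd G w)ᶜ
  have hdisj : Disjoint B (Set.range a) :=
    (disjoint_compl_left.mono_left hB.1).mono_right (subset_biUnion_closedNbhd G _)
  have hcard := hU.ncard_eq_indepNumOn
    (hB.union_isMaxIndepOn_univ (isIndep_range_of_pairwise hindep))
  rw [Set.ncard_union_eq hdisj, Set.ncard_range_of_injective hinj, Nat.card_fin] at hcard
  omega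

/-- If `G` is triangle-free and unmixed and `W = {a¹,…,aᵗ,b}` induces a star
centered at `b` that is maximal among induced stars of `G`, then
`α(G \ N_G[W]) = α(G) - t`. -/
theorem indepNum_of_maximal_star_unmixed
    {V : Type*} [Fintype V] (G : SimpleGraph V)
    (hG : G.CliqueFree 3) (hU : Unmixed G)
    {t : ℕ} (ht : 1 ≤ t) (a : Fin t → V) (b : V)
    (hinj : Function.Injective a) (hne : ∀ i, a i ≠ b)
    (hstar : ∀ i, G.Adj (a i) b)
    (hindep : ∀ i j, i ≠ j → ¬ G.Adj (a i) (a j))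
    (hmax : ∀ v : V, v ∉ insert b (Set.range a) →
      ¬ (G.Adj v b ∧ ∀ i, ¬ G.Adj v (a i))) :
    indepNumOn G ((⋃ w ∈ insert b (Set.range a), closedNbhd G w))ᶜ =
      indepNumOn G Set.univ - t :=
  indepNum_of_maximal_star_unmixed_general G hU ht a b hinj hstar hindep hmax
end

section
/- Let G be a finite simple graph, U a subset of V(G), A a maximal independent set of the induced subgraph G \ U, and let U_A = {v ∈ U : N_G(v) ∩ A = ∅}. Suppose U' ⊆ U_A and B is a maximal independent set of the induced subgraph of G on U_A \ U'. Then A ∪ B is a maximal independent set of the induced subgraph G \ U'. -/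
open Set

namespace IsIndep

variable {V : Type*} {G : SimpleGraph V} {A B C : Set V}

theorem mono (hB : IsIndep G B) (hAB : A ⊆ B) : IsIndep G A :=
  fun a ha b hb => hB a (hAB ha) b (hAB hb)

theorem union (hA : IsIndep G A) (hB : IsIndep G B) (hAB : ∀ a ∈ A, ∀ b ∈ B, ¬ G.Adj a b) :
    IsIndep G (A ∪ B) := by
  rintro x (hx | hx) y (hy | hy) hxy
  · exact hA x hx y hy hxy
  · exact hAB x hx y hy hxy
  · exact hAB y hy x hx hxy.symm
  · exact hB x hx y hy hxy

theorem neighborSet_inter_eq_empty (hC : IsIndep G C) (hAC : A ⊆ C) {v : V} (hv : v ∈ C) :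
    G.neighborSet v ∩ A = ∅ :=
  eq_empty_iff_forall_notMem.2 fun a ⟨hva, ha⟩ => hC v hv a (hAC ha) hva

end IsIndep

theorem not_adj_of_neighborSet_inter_eq_empty {V : Type*} {G : SimpleGraph V} {A : Set V}
    {v a : V} (hv : G.neighborSet v ∩ A = ∅) (ha : a ∈ A) : ¬ G.Adj v a :=
  fun hva => (eq_empty_iff_forall_notMem.1 hv) a ⟨hva, ha⟩

theorem IsMaxIndepOn.inter_eq_of_subset {V : Type*} {G : SimpleGraph V} {S A C : Set V}
    (hA : IsMaxIndepOn G S A) (hC : IsIndep G C) (hAC : A ⊆ C) : C ∩ S = A :=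
  hA.2.2 _ inter_subset_right (hC.mono inter_subset_left) (subset_inter hAC hA.1)

theorem maxIndep_union_of_maxIndep_pieces_general
    {V : Type*} (G : SimpleGraph V) (U U' A B : Set V)
    (hA : IsMaxIndepOn G Uᶜ A)
    (hU' : U' ⊆ {v ∈ U | G.neighborSet v ∩ A = ∅})
    (hB : IsMaxIndepOn G ({v ∈ U | G.neighborSet v ∩ A = ∅} \ U') B) :
    IsMaxIndepOn G U'ᶜ (A ∪ B) := by
  have hAB : ∀ a ∈ A, ∀ b ∈ B, ¬ G.Adj a b := fun a ha b hb hab =>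
    not_adj_of_neighborSet_inter_eq_empty (hB.1 hb).1.2 ha hab.symm
  refine ⟨union_subset (fun a ha haU' => hA.1 ha (hU' haU').1) fun b hb => (hB.1 hb).2,
    hA.2.1.union hB.2.1 hAB, fun C hC hCind hABC => Subset.antisymm (fun c hc => ?_) hABC⟩
  have hAC : A ⊆ C := subset_union_left.trans hABC
  -- a vertex of `C` in `U` has no neighbour in `A ⊆ C`, so it lies in `U_A \ U'`
  by_cases hcU : c ∈ U
  · rw [← hB.inter_eq_of_subset hCind (subset_union_right.trans hABC)]
    exact Or.inr ⟨hc, ⟨hcU, hCind.neighborSet_inter_eq_empty hAC hc⟩, hC hc⟩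
  · rw [← hA.inter_eq_of_subset hCind hAC]
    exact Or.inl ⟨hc, hcU⟩

/-- Claim 1: if `A` is a maximal independent set of `G \ U`,
`U_A = {v ∈ U : N_G(v) ∩ A = ∅}`, `U' ⊆ U_A` and `B` is a maximal independent
set of the induced subgraph on `U_A \ U'`, then `A ∪ B` is a maximal
independent set of `G \ U'`. -/
theorem maxIndep_union_of_maxIndep_pieces
    {V : Type*} [Fintype V] (G : SimpleGraph V) (U U' A B : Set V)
    (hA : IsMaxIndepOn G Uᶜ A)
    (hU' : U' ⊆ {v ∈ U | G.neighborSet v ∩ A = ∅})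
    (hB : IsMaxIndepOn G ({v ∈ U | G.neighborSet v ∩ A = ∅} \ U') B) :
    IsMaxIndepOn G U'ᶜ (A ∪ B) :=
  maxIndep_union_of_maxIndep_pieces_general G U U' A B hA hU' hB
end

section
/- Let G be a finite simple graph on vertex set V, and for a monomial-ideal-free formulation define a subset σ ⊆ V×{1,2} to be admissible if it contains no set of the form {(a,1),(a,2),(b,1),(b,2)} with {a,b} ∈ E(G), no set {(a,1),(b,1),(b,2),(c,1)} with {a,b},{b,c} ∈ E(G) and a ≠ c, and no set {(a,1),(b,1),(c,1),(d,1)} with {a,b},{c,d} ∈ E(G) disjoint edges. Then for every maximal independent set A of G, the set (A×{1}) ∪ (V×{2}) is a maximal admissible set. -/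
/-- `σ ⊆ V × {0,1}` is admissible: it avoids the three forbidden
configurations corresponding to the minimal generators `a₁a₂b₁b₂`,
`a₁b₁b₂c₁`, `a₁b₁c₁d₁` of the polarization of `I(G)²`. -/
def Admissible {V : Type*} (G : SimpleGraph V) (σ : Set (V × Fin 2)) : Prop :=
  (∀ a b : V, G.Adj a b →
    ¬ ((a, 0) ∈ σ ∧ (a, 1) ∈ σ ∧ (b, 0) ∈ σ ∧ (b, 1) ∈ σ)) ∧
  (∀ a b c : V, G.Adj a b → G.Adj b c → a ≠ c →
    ¬ ((a, 0) ∈ σ ∧ (b, 0) ∈ σ ∧ (b, 1) ∈ σ ∧ (c, 0) ∈ σ)) ∧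
  (∀ a b c d : V, G.Adj a b → G.Adj c d →
    a ≠ c → a ≠ d → b ≠ c → b ≠ d →
    ¬ ((a, 0) ∈ σ ∧ (b, 0) ∈ σ ∧ (c, 0) ∈ σ ∧ (d, 0) ∈ σ))

/-- `σ` is a maximal admissible set. -/
def MaximalAdmissible {V : Type*} (G : SimpleGraph V) (σ : Set (V × Fin 2)) : Prop :=
  Admissible G σ ∧ ∀ τ : Set (V × Fin 2), Admissible G τ → σ ⊆ τ → τ = σ

/-!
Every forbidden configuration contains `(a, 1)` and `(b, 1)` for an edge `ab`, so a set whose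
first layer (index `0` in `Fin 2`) is independent is admissible. Conversely, the first
configuration makes the first layer of an admissible set containing `V × {2}` independent; for
an admissible superset of `(A × {1}) ∪ (V × {2})` that layer contains `A`, so it is `A`.
-/

section

variable {V : Type*} {G : SimpleGraph V}

theorem Admissible.of_isIndep_layer {σ : Set (V × Fin 2)} (h : IsIndep G {x | (x, 0) ∈ σ}) :
    Admissible G σ :=
  ⟨fun a b hab ⟨ha, _, hb, _⟩ => h a ha b hb hab,
    fun a b _ hab _ _ ⟨ha, hb, _, _⟩ => h a ha b hb hab,
    fun a b _ _ hab _ _ _ _ _ ⟨ha, hb, _, _⟩ => h a ha b hb hab⟩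

theorem Admissible.isIndep_layer {τ : Set (V × Fin 2)} (hτ : Admissible G τ)
    (h₁ : ∀ x, (x, 1) ∈ τ) : IsIndep G {x | (x, 0) ∈ τ} :=
  fun a ha b hb hab => hτ.1 a b hab ⟨ha, h₁ a, hb, h₁ b⟩

end

theorem maximalAdmissible_of_maxIndep_general
    {V : Type*} (G : SimpleGraph V) (A : Set V)
    (hA : IsMaxIndepOn G Set.univ A) :
    MaximalAdmissible G
      ((A ×ˢ ({0} : Set (Fin 2))) ∪ ((Set.univ : Set V) ×ˢ ({1} : Set (Fin 2)))) := by
  obtain ⟨-, hInd, hMax⟩ := hA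
  set σ : Set (V × Fin 2) := (A ×ˢ {0}) ∪ (Set.univ ×ˢ {1})
  have layer₀ : {x | (x, 0) ∈ σ} = A := by ext; simp [σ]
  have layer₁ : ∀ x, (x, 1) ∈ σ := by simp [σ]
  refine ⟨.of_isIndep_layer (layer₀ ▸ hInd), fun τ hτ hστ => ?_⟩
  have hτ₀ : {x | (x, 0) ∈ τ} = A :=
    hMax _ (Set.subset_univ _) (hτ.isIndep_layer fun x => hστ (layer₁ x))
      (layer₀ ▸ fun _ hx => hστ hx)
  refine hστ.antisymm' ?_
  rintro ⟨x, i⟩ hx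
  fin_cases i
  · exact layer₀.superset (hτ₀.subset hx)
  · exact layer₁ x

/-- For every maximal independent set `A` of `G`, the set
`(A × {1}) ∪ (V × {2})` is a maximal admissible set (independent type facet). -/
theorem maximalAdmissible_of_maxIndep
    {V : Type*} [Fintype V] (G : SimpleGraph V) (A : Set V)
    (hA : IsMaxIndepOn G Set.univ A) :
    MaximalAdmissible G
      ((A ×ˢ ({0} : Set (Fin 2))) ∪ ((Set.univ : Set V) ×ˢ ({1} : Set (Fin 2)))) :=
  maximalAdmissible_of_maxIndep_general G A hA
end

section
/- Let G be a finite simple graph on vertex set V, with admissible subsets of V×{1,2} as defined by the three forbidden configurations (edge-square, star, matching). Suppose W = {a,b,c} induces a triangle in G and A is a maximal independent set of G \ N_G[W]. Then σ = (W ∪ A)×{1} ∪ (V \ W)×{2} is a maximal admissible set. -/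
/-!
In `σ` a vertex carries both levels iff it lies outside `W`, and every edge inside the level-1
part `W ∪ A` lies in `W`, because `A` is independent and misses `N_G[W]`. Hence an edge-square or
a star in `σ` would need a level-1 edge meeting `A`, and two disjoint level-1 edges would need four
vertices of `W`. For maximality: adding `(w, 2)` with `w ∈ W` creates a star centred at `w` on the
triangle; adding `(v, 1)` with `v ∉ W` adjacent to `W` creates a matching with the opposite edge of
the triangle; and any other `v ∉ W ∪ A` has a neighbour `u ∈ A` by maximality of `A`, which gives
an edge-square on `v, u`.
-/

lemma four_le_encard_of_ne {α : Type*} {s : Set α} {p q r t : α}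
    (hp : p ∈ s) (hq : q ∈ s) (hr : r ∈ s) (ht : t ∈ s)
    (hpq : p ≠ q) (hpr : p ≠ r) (hpt : p ≠ t) (hqr : q ≠ r) (hqt : q ≠ t) (hrt : r ≠ t) :
    4 ≤ s.encard := by
  have hsub : ({p, q, r, t} : Set α) ⊆ s := by
    simp [Set.insert_subset_iff, hp, hq, hr, ht]
  calc (4 : ℕ∞) = ({p, q, r, t} : Set α).encard := by
        rw [Set.encard_insert_of_notMem (by simp [hpq, hpr, hpt]),
          Set.encard_insert_of_notMem (by simp [hqr, hqt]), Set.encard_pair hrt]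
        rfl
    _ ≤ s.encard := Set.encard_le_encard hsub

lemma encard_triple_le {α : Type*} (a b c : α) : ({a, b, c} : Set α).encard ≤ 3 :=
  calc ({a, b, c} : Set α).encard ≤ ({b, c} : Set α).encard + 1 := Set.encard_insert_le _ _
    _ ≤ 3 := by
      grw [Set.encard_insert_le, Set.encard_singleton]
      rfl

section

variable {V : Type*} {G : SimpleGraph V}

/-- `(W ∪ A) × {1} ∪ Wᶜ × {2}`, with the levels `1, 2` encoded as `0, 1 : Fin 2`. -/
def levelSet (W A : Set V) : Set (V × Fin 2) :=
  ((W ∪ A) ×ˢ ({0} : Set (Fin 2))) ∪ (Wᶜ ×ˢ ({1} : Set (Fin 2)))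

@[simp]
lemma mk_zero_mem_levelSet {W A : Set V} {v : V} : (v, 0) ∈ levelSet W A ↔ v ∈ W ∪ A := by
  simp [levelSet]

@[simp]
lemma mk_one_mem_levelSet {W A : Set V} {v : V} : (v, 1) ∈ levelSet W A ↔ v ∉ W := by
  simp [levelSet]

lemma IsMaxIndepOn.exists_adj_of_notMem {S A : Set V} {v : V} (hA : IsMaxIndepOn G S A)
    (hvS : v ∈ S) (hvA : v ∉ A) : ∃ u ∈ A, G.Adj v u := by
  by_contra! hv
  suffices IsIndep G (insert v A) from
    hvA (hA.2.2 _ (Set.insert_subset hvS hA.1) this (Set.subset_insert v A) ▸ Set.mem_insert v A)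
  rintro x (rfl | hx) y (rfl | hy)
  · exact G.irrefl
  · exact hv y hy
  · exact fun h => hv x hx h.symm
  · exact hA.2.1 x hx y hy

section LevelSet

variable {W A : Set V}

lemma not_adj_of_disjoint_closedNbhd (hA : IsIndep G A)
    (hfar : Disjoint A (⋃ w ∈ W, closedNbhd G w)) {x y : V} (hx : x ∈ W ∪ A) (hy : y ∈ A) :
    ¬ G.Adj x y := by
  rcases hx with hx | hx
  · exact fun h => Set.disjoint_left.1 hfar hy
      (Set.mem_biUnion hx (Set.mem_insert_of_mem _ h))
  · exact hA x hx y hy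

lemma admissible_levelSet (hW : W.encard ≤ 3) (hA : IsIndep G A)
    (hfar : Disjoint A (⋃ w ∈ W, closedNbhd G w)) : Admissible G (levelSet W A) := by
  have hnadj {x y : V} : x ∈ W ∪ A → y ∈ A → ¬ G.Adj x y :=
    not_adj_of_disjoint_closedNbhd hA hfar
  have mem_W {x y : V} (hx : x ∈ W ∪ A) (hy : y ∈ W ∪ A) (h : G.Adj x y) : x ∈ W ∧ y ∈ W :=
    ⟨hx.resolve_right fun hx' => hnadj hy hx' h.symm, hy.resolve_right fun hy' => hnadj hx hy' h⟩
  refine ⟨?_, ?_, ?_⟩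
  · simp only [mk_zero_mem_levelSet, mk_one_mem_levelSet]
    rintro x y hxy ⟨hx0, hx1, hy0, hy1⟩
    exact hA x (hx0.resolve_left hx1) y (hy0.resolve_left hy1) hxy
  · simp only [mk_zero_mem_levelSet, mk_one_mem_levelSet]
    rintro x y z hxy - - ⟨hx0, hy0, hy1, -⟩
    exact hnadj hx0 (hy0.resolve_left hy1) hxy
  · simp only [mk_zero_mem_levelSet]
    rintro p q r s hpq hrs hpr hps hqr hqs ⟨hp, hq, hr, hs⟩
    obtain ⟨hpW, hqW⟩ := mem_W hp hq hpq
    obtain ⟨hrW, hsW⟩ := mem_W hr hs hrs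
    have := four_le_encard_of_ne hpW hqW hrW hsW hpq.ne hpr hps hqr hqs hrs.ne
    exact absurd (this.trans hW) (by decide)

end LevelSet

section Triangle

variable {τ : Set (V × Fin 2)} {a b c : V}

lemma Admissible.mk_one_notMem_of_triangle (hτ : Admissible G τ)
    (hab : G.Adj a b) (hbc : G.Adj b c) (hac : G.Adj a c)
    (ha : (a, 0) ∈ τ) (hb : (b, 0) ∈ τ) (hc : (c, 0) ∈ τ) : (a, 1) ∉ τ :=
  fun ha1 => hτ.2.1 b a c hab.symm hac hbc.ne ⟨hb, ha, ha1, hc⟩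

lemma Admissible.not_adj_of_triangle (hτ : Admissible G τ)
    (hab : G.Adj a b) (hbc : G.Adj b c) (hac : G.Adj a c)
    (ha : (a, 0) ∈ τ) (hb : (b, 0) ∈ τ) (hc : (c, 0) ∈ τ)
    {v : V} (hv : (v, 0) ∈ τ) (hvb : v ≠ b) (hvc : v ≠ c) : ¬ G.Adj v a :=
  fun hva => hτ.2.2 v a b c hva hbc hvb hvc hab.ne hac.ne ⟨hv, ha, hb, hc⟩

lemma Admissible.subset_levelSet_triangle (hτ : Admissible G τ)
    (hab : G.Adj a b) (hbc : G.Adj b c) (hac : G.Adj a c) {A : Set V}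
    (hA : IsMaxIndepOn G (⋃ w ∈ ({a, b, c} : Set V), closedNbhd G w)ᶜ A)
    (hsub : levelSet {a, b, c} A ⊆ τ) : τ ⊆ levelSet {a, b, c} A := by
  have h0 {v : V} (hv : v ∈ ({a, b, c} : Set V) ∪ A) : (v, 0) ∈ τ :=
    hsub (mk_zero_mem_levelSet.2 hv)
  have ha : (a, 0) ∈ τ := h0 (by simp)
  have hb : (b, 0) ∈ τ := h0 (by simp)
  have hc : (c, 0) ∈ τ := h0 (by simp)
  rintro ⟨v, i⟩ hv
  fin_cases i
  · show (v, 0) ∈ levelSet _ _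
    rw [mk_zero_mem_levelSet]
    by_contra hvWA
    simp only [Set.mem_union, Set.mem_insert_iff, Set.mem_singleton_iff, not_or] at hvWA
    obtain ⟨⟨hva, hvb, hvc⟩, hvA⟩ := hvWA
    by_cases hvS : v ∈ ⋃ w ∈ ({a, b, c} : Set V), closedNbhd G w
    · simp only [Set.mem_iUnion, closedNbhd, Set.mem_insert_iff, SimpleGraph.mem_neighborSet,
        Set.mem_singleton_iff, exists_prop, exists_eq_or_imp, exists_eq_left] at hvS
      rcases hvS with (rfl | hav) | (rfl | hbv) | (rfl | hcv)
      exacts [hva rfl, hτ.not_adj_of_triangle hab hbc hac ha hb hc hv hvb hvc hav.symm,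
        hvb rfl, hτ.not_adj_of_triangle hab.symm hac hbc hb ha hc hv hva hvc hbv.symm,
        hvc rfl, hτ.not_adj_of_triangle hac.symm hab hbc.symm hc ha hb hv hva hvb hcv.symm]
    · obtain ⟨u, huA, hvu⟩ := hA.exists_adj_of_notMem hvS hvA
      have huW : u ∉ ({a, b, c} : Set V) := fun hu =>
        hA.1 huA (Set.mem_biUnion hu (Set.mem_insert u _))
      exact hτ.1 v u hvu ⟨hv, hsub (by simp [hva, hvb, hvc]), h0 (Or.inr huA),
        hsub (mk_one_mem_levelSet.2 huW)⟩
  · show (v, 1) ∈ levelSet _ _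
    rw [mk_one_mem_levelSet]
    rintro (rfl | rfl | rfl)
    exacts [hτ.mk_one_notMem_of_triangle hab hbc hac ha hb hc hv,
      hτ.mk_one_notMem_of_triangle hab.symm hac hbc hb ha hc hv,
      hτ.mk_one_notMem_of_triangle hac.symm hab hbc.symm hc ha hb hv]

end Triangle

end

theorem maximalAdmissible_triangle_type_general
    {V : Type*} (G : SimpleGraph V) (a b c : V)
    (hab : G.Adj a b) (hbc : G.Adj b c) (hac : G.Adj a c) (A : Set V)
    (hA : IsMaxIndepOn G ((⋃ w ∈ ({a, b, c} : Set V), closedNbhd G w))ᶜ A) :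
    MaximalAdmissible G
      (((({a, b, c} : Set V) ∪ A) ×ˢ ({0} : Set (Fin 2))) ∪
        ((({a, b, c} : Set V)ᶜ) ×ˢ ({1} : Set (Fin 2)))) :=
  ⟨admissible_levelSet (encard_triple_le a b c) hA.2.1
      (Set.subset_compl_iff_disjoint_right.1 hA.1),
    fun _ hτ hsub => (hτ.subset_levelSet_triangle hab hbc hac hA hsub).antisymm hsub⟩

/-- Triangle type facets: if `W = {a,b,c}` induces a triangle in `G` and `A`
is a maximal independent set of `G \ N_G[W]`, then
`σ = (W ∪ A) × {1} ∪ (V \ W) × {2}` is a maximal admissible set. -/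
theorem maximalAdmissible_triangle_type
    {V : Type*} [Fintype V] (G : SimpleGraph V) (a b c : V)
    (hab : G.Adj a b) (hbc : G.Adj b c) (hac : G.Adj a c) (A : Set V)
    (hA : IsMaxIndepOn G ((⋃ w ∈ ({a, b, c} : Set V), closedNbhd G w))ᶜ A) :
    MaximalAdmissible G
      (((({a, b, c} : Set V) ∪ A) ×ˢ ({0} : Set (Fin 2))) ∪
        ((({a, b, c} : Set V)ᶜ) ×ˢ ({1} : Set (Fin 2)))) :=
  maximalAdmissible_triangle_type_general G a b c hab hbc hac A hA
end

section
/- Let G be a finite simple triangle-free graph, x and y adjacent vertices, U = N_G[x] ∪ N_G[y], A a maximal independent set of G \ U, and U_A = {v ∈ U : N_G(v) ∩ A = ∅}. Then in the induced subgraph of G on U_A, every vertex other than x is adjacent to x or to y but not both, x and y are adjacent, the neighbors of x in U_A \ {y} are pairwise nonadjacent, and the neighbors of y in U_A \ {x} are pairwise nonadjacent; i.e., the induced subgraph on U_A is bipartite of the 'double star' form: U_A = {x} ∪ (N_{U_A}(y)\{x}) ∪ {y} ∪ (N_{U_A}(x)\{y}) with N(x) ∩ U_A and N(y) ∩ U_A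 as the two sides. -/
lemma adj_or_adj_of_mem_closedNbhd_union {V : Type*} {G : SimpleGraph V} {x y v : V}
    (hv : v ∈ closedNbhd G x ∪ closedNbhd G y) (hvx : v ≠ x) (hvy : v ≠ y) :
    G.Adj v x ∨ G.Adj v y := by
  rcases hv with (rfl | hx) | (rfl | hy)
  · exact absurd rfl hvx
  · exact .inl hx.symm
  · exact absurd rfl hvy
  · exact .inr hy.symm

theorem UA_double_star_general
    {V : Type*} (G : SimpleGraph V)
    (hG : G.CliqueFree 3) (x y : V) (hxy : G.Adj x y) (A : Set V) :
    G.Adj x y ∧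
    (∀ v ∈ {v ∈ closedNbhd G x ∪ closedNbhd G y | G.neighborSet v ∩ A = ∅},
      v ≠ x → v ≠ y →
        (G.Adj v x ∨ G.Adj v y) ∧ ¬ (G.Adj v x ∧ G.Adj v y)) ∧
    (∀ u ∈ {v ∈ closedNbhd G x ∪ closedNbhd G y | G.neighborSet v ∩ A = ∅},
      ∀ v ∈ {v ∈ closedNbhd G x ∪ closedNbhd G y | G.neighborSet v ∩ A = ∅},
        u ≠ y → v ≠ y → G.Adj u x → G.Adj v x → ¬ G.Adj u v) ∧
    (∀ u ∈ {v ∈ closedNbhd G x ∪ closedNbhd G y | G.neighborSet v ∩ A = ∅},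
      ∀ v ∈ {v ∈ closedNbhd G x ∪ closedNbhd G y | G.neighborSet v ∩ A = ∅},
        u ≠ x → v ≠ x → G.Adj u y → G.Adj v y → ¬ G.Adj u v) := by
  have indep := G.isIndepSet_neighborSet_of_triangleFree hG
  refine ⟨hxy, ?_, ?_, ?_⟩
  · rintro v ⟨hvU, -⟩ hvx hvy
    exact ⟨adj_or_adj_of_mem_closedNbhd_union hvU hvx hvy,
      fun ⟨hx, hy⟩ ↦ indep v hx hy hxy.ne hxy⟩
  · rintro u - v - - - hux hvx huv
    exact indep x hux.symm hvx.symm huv.ne huv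
  · rintro u - v - - - huy hvy huv
    exact indep y huy.symm hvy.symm huv.ne huv

/-- Let `G` be triangle-free, `x` and `y` adjacent, `U = N_G[x] ∪ N_G[y]`, `A`
a maximal independent set of `G \ U`, and `U_A = {v ∈ U : N_G(v) ∩ A = ∅}`.
Then the induced subgraph on `U_A` is a "double star": `x` and `y` are
adjacent, every vertex of `U_A` other than `x, y` is adjacent to exactly one
of `x, y`, and the neighbors of `x` (other than `y`) in `U_A` are pairwise
nonadjacent, as are the neighbors of `y` (other than `x`). -/
theorem UA_double_star
    {V : Type*} [Fintype V] (G : SimpleGraph V)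
    (hG : G.CliqueFree 3) (x y : V) (hxy : G.Adj x y) (A : Set V)
    (hA : IsMaxIndepOn G (closedNbhd G x ∪ closedNbhd G y)ᶜ A) :
    G.Adj x y ∧
    (∀ v ∈ {v ∈ closedNbhd G x ∪ closedNbhd G y | G.neighborSet v ∩ A = ∅},
      v ≠ x → v ≠ y →
        (G.Adj v x ∨ G.Adj v y) ∧ ¬ (G.Adj v x ∧ G.Adj v y)) ∧
    (∀ u ∈ {v ∈ closedNbhd G x ∪ closedNbhd G y | G.neighborSet v ∩ A = ∅},
      ∀ v ∈ {v ∈ closedNbhd G x ∪ closedNbhd G y | G.neighborSet v ∩ A = ∅},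
        u ≠ y → v ≠ y → G.Adj u x → G.Adj v x → ¬ G.Adj u v) ∧
    (∀ u ∈ {v ∈ closedNbhd G x ∪ closedNbhd G y | G.neighborSet v ∩ A = ∅},
      ∀ v ∈ {v ∈ closedNbhd G x ∪ closedNbhd G y | G.neighborSet v ∩ A = ∅},
        u ≠ x → v ≠ x → G.Adj u y → G.Adj v y → ¬ G.Adj u v) :=
  UA_double_star_general G hG x y hxy A
end
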